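/- For every p ∈ [0,1] and every R with 0 ≤ R < I_0(p), the partial error exponent is strictly positive: E(p,R) > 0. -/

import Mathlib

open Finset

/-- Output distribution `P_p(y) = (1−p)·P(y|0) + p·P(y|1)`. -/
noncomputable def outDist {𝒴 : Type} [Fintype 𝒴] (P : ZMod 2 → 𝒴 → ℝ) (p : ℝ)
    (y : 𝒴) : ℝ := (1 - p) * P 0 y + p * P 1 y

/-- Partial mutual information `I_0(p) = Σ_y P(y|0)·log₂(P(y|0)/P_p(y))`. -/
noncomputable def partialMI0 {𝒴 : Type} [Fintype 𝒴] (P : ZMod 2 → 𝒴 → ℝ) (p : ℝ) : ℝ :=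
  ∑ y : 𝒴, P 0 y * Real.logb 2 (P 0 y / outDist P p y)

/-- Gallager-type function
`E_0(p,γ) = −log₂ Σ_y P(y|0)^{1/(1+γ)}·[(1−p)·P(y|0)^{1/(1+γ)} + p·P(y|1)^{1/(1+γ)}]^γ`. -/
noncomputable def gallagerE0 {𝒴 : Type} [Fintype 𝒴] (P : ZMod 2 → 𝒴 → ℝ)
    (p γ : ℝ) : ℝ :=
  -Real.logb 2 (∑ y : 𝒴, P 0 y ^ ((1 : ℝ) / (1 + γ)) *
    ((1 - p) * P 0 y ^ ((1 : ℝ) / (1 + γ)) + p * P 1 y ^ ((1 : ℝ) / (1 + γ))) ^ γ)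

/-- Partial error exponent `E(p,R) = max_{γ∈[0,1]} (E_0(p,γ) − γ·R)`. -/
noncomputable def partialErrorExponent {𝒴 : Type} [Fintype 𝒴] (P : ZMod 2 → 𝒴 → ℝ)
    (p R : ℝ) : ℝ :=
  sSup ((fun γ => gallagerE0 P p γ - γ * R) '' Set.Icc (0 : ℝ) 1)

/-! `F(γ) = E_0(p,γ) − γR` vanishes at `γ = 0`, where the Gallager sum reduces to
`Σ_y P(y|0) = 1`. Differentiating each summand `P(y|0)^{1/(1+γ)}·[⋯]^γ` at `γ = 0` gives
`P(y|0)·ln (P_p(y)/P(y|0))`, so `F'(0) = I_0(p) − R > 0` and `F` is positive somewhere in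
`(0,1)`. As `F` is continuous on `[0,1]`, its supremum there is at least that value. -/

open Real

lemma exists_mem_Ioo_pos_of_hasDerivAt {f : ℝ → ℝ} {f' a b : ℝ} (hf : HasDerivAt f f' a)
    (hf' : 0 < f') (ha : f a = 0) (hab : a < b) : ∃ x ∈ Set.Ioo a b, 0 < f x := by
  have hsign := eventually_nhdsWithin_sign_eq_of_deriv_pos (hf.deriv ▸ hf') ha
  obtain ⟨x, hx_sign, hx⟩ :=
    ((hsign.filter_mono (nhdsWithin_le_nhds (s := Set.Ioi a))).and (Ioo_mem_nhdsGT hab)).exists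
  rw [sign_pos (sub_pos.2 hx.1), sign_eq_one_iff] at hx_sign
  exact ⟨x, hx, hx_sign⟩

lemma one_sub_mul_add_mul_pos {p a b : ℝ} (hp : p ∈ Set.Icc 0 1) (ha : 0 < a) (hb : 0 < b) :
    0 < (1 - p) * a + p * b := by
  simpa using convex_Ioi (0 : ℝ) ha hb (sub_nonneg.2 hp.2) hp.1 (sub_add_cancel 1 p)

noncomputable def gallagerTerm (p a b γ : ℝ) : ℝ :=
  a ^ (1 / (1 + γ)) * ((1 - p) * a ^ (1 / (1 + γ)) + p * b ^ (1 / (1 + γ))) ^ γ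

lemma gallagerTerm_zero (p a b : ℝ) : gallagerTerm p a b 0 = a := by
  simp [gallagerTerm]

lemma gallagerTerm_pos {p a b : ℝ} (hp : p ∈ Set.Icc 0 1) (ha : 0 < a) (hb : 0 < b) (γ : ℝ) :
    0 < gallagerTerm p a b γ :=
  mul_pos (rpow_pos_of_pos ha _) <| rpow_pos_of_pos
    (one_sub_mul_add_mul_pos hp (rpow_pos_of_pos ha _) (rpow_pos_of_pos hb _)) _

lemma hasDerivAt_rpow_one_div_one_add {a : ℝ} (ha : 0 < a) :
    HasDerivAt (fun γ : ℝ => a ^ (1 / (1 + γ))) (-(a * log a)) 0 := by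
  have hexp : HasDerivAt (fun γ : ℝ => 1 / (1 + γ)) (-1) 0 := by
    simpa [one_div] using ((hasDerivAt_id (0 : ℝ)).const_add 1).fun_inv (by norm_num)
  simpa [mul_comm] using hexp.const_rpow ha

lemma hasDerivAt_gallagerTerm {p a b : ℝ} (ha : 0 < a) (hb : 0 < b)
    (hc : 0 < (1 - p) * a + p * b) :
    HasDerivAt (gallagerTerm p a b) (a * (log ((1 - p) * a + p * b) - log a)) 0 := by
  have hbracket := ((hasDerivAt_rpow_one_div_one_add ha).const_mul (1 - p)).add
    ((hasDerivAt_rpow_one_div_one_add hb).const_mul p)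
  refine ((hasDerivAt_rpow_one_div_one_add ha).mul
    (hbracket.rpow (hasDerivAt_id 0) (by simpa using hc))).congr_deriv ?_
  simp only [one_div, Pi.add_apply, add_zero, inv_one, rpow_one, id_eq, rpow_zero, mul_one,
    ne_eq, one_ne_zero, not_false_eq_true, div_self, mul_neg, mul_zero, zero_sub, zero_mul,
    one_mul, zero_add]
  ring

lemma continuousOn_gallagerTerm {p a b : ℝ} (hp : p ∈ Set.Icc 0 1) (ha : 0 < a) (hb : 0 < b) :
    ContinuousOn (gallagerTerm p a b) (Set.Ioi (-1)) := by
  have hexp : ContinuousOn (fun γ : ℝ => 1 / (1 + γ)) (Set.Ioi (-1)) :=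
    continuousOn_const.div (by fun_prop) fun γ (hγ : -1 < γ) => by linarith
  have hpow {x : ℝ} (hx : 0 < x) :
      ContinuousOn (fun γ : ℝ => x ^ (1 / (1 + γ))) (Set.Ioi (-1)) :=
    continuousOn_const.rpow hexp fun _ _ => Or.inl hx.ne'
  exact (hpow ha).mul <|
    ((continuousOn_const.mul (hpow ha)).add (continuousOn_const.mul (hpow hb))).rpow
      continuousOn_id fun γ _ => Or.inl
        (one_sub_mul_add_mul_pos hp (rpow_pos_of_pos ha _) (rpow_pos_of_pos hb _)).ne'

section

variable {𝒴 : Type} [Fintype 𝒴] {P : ZMod 2 → 𝒴 → ℝ} {p : ℝ}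

lemma gallagerE0_eq_neg_logb_sum (γ : ℝ) :
    gallagerE0 P p γ = -logb 2 (∑ y, gallagerTerm p (P 0 y) (P 1 y) γ) := rfl

lemma gallagerE0_zero (hP0 : ∑ y, P 0 y = 1) : gallagerE0 P p 0 = 0 := by
  simp [gallagerE0_eq_neg_logb_sum, gallagerTerm_zero, hP0]

lemma outDist_pos (hPpos : ∀ x y, 0 < P x y) (hp : p ∈ Set.Icc 0 1) (y : 𝒴) :
    0 < outDist P p y :=
  one_sub_mul_add_mul_pos hp (hPpos 0 y) (hPpos 1 y)

lemma hasDerivAt_gallagerE0_zero (hPpos : ∀ x y, 0 < P x y) (hP0 : ∑ y, P 0 y = 1)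
    (hp : p ∈ Set.Icc 0 1) : HasDerivAt (gallagerE0 P p) (partialMI0 P p) 0 := by
  have hsum : HasDerivAt (fun γ => ∑ y, gallagerTerm p (P 0 y) (P 1 y) γ)
      (∑ y, P 0 y * (log (outDist P p y) - log (P 0 y))) 0 :=
    HasDerivAt.fun_sum fun y _ =>
      hasDerivAt_gallagerTerm (hPpos 0 y) (hPpos 1 y) (outDist_pos hPpos hp y)
  refine ((hsum.log (by simp [gallagerTerm_zero, hP0])).div_const (log 2)).fun_neg.congr_deriv ?_
  simp only [gallagerTerm_zero, hP0, div_one, partialMI0, sum_div, ← sum_neg_distrib]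
  refine sum_congr rfl fun y _ => ?_
  rw [logb, log_div (hPpos 0 y).ne' (outDist_pos hPpos hp y).ne']
  ring

lemma continuousOn_gallagerE0 [Nonempty 𝒴] (hPpos : ∀ x y, 0 < P x y)
    (hp : p ∈ Set.Icc 0 1) : ContinuousOn (gallagerE0 P p) (Set.Ioi (-1)) := by
  have hsum : ContinuousOn (fun γ => ∑ y, gallagerTerm p (P 0 y) (P 1 y) γ) (Set.Ioi (-1)) :=
    continuousOn_finsetSum _ fun y _ => continuousOn_gallagerTerm hp (hPpos 0 y) (hPpos 1 y)
  refine ((hsum.log fun γ _ => ?_).div_const _).neg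
  exact (sum_pos (fun y _ => gallagerTerm_pos hp (hPpos 0 y) (hPpos 1 y) γ) univ_nonempty).ne'

end

theorem partialErrorExponent_pos_general
    (𝒴 : Type) [Fintype 𝒴]
    (P : ZMod 2 → 𝒴 → ℝ)
    (hPpos : ∀ x y, 0 < P x y) (hPsum : ∀ x, ∑ y : 𝒴, P x y = 1)
    (p : ℝ) (hp : p ∈ Set.Icc (0 : ℝ) 1)
    (R : ℝ) (hR : R < partialMI0 P p) :
    0 < partialErrorExponent P p R := by
  have : Nonempty 𝒴 :=
    (nonempty_of_sum_ne_zero (s := univ) (f := P 0) (by simp [hPsum 0])).to_type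
  set F := fun γ => gallagerE0 P p γ - γ * R
  have hF0 : F 0 = 0 := by simp [F, gallagerE0_zero (hPsum 0)]
  have hF' : HasDerivAt F (partialMI0 P p - R) 0 :=
    (hasDerivAt_gallagerE0_zero hPpos (hPsum 0) hp).sub
      (by simpa using (hasDerivAt_id (0 : ℝ)).mul_const R)
  obtain ⟨γ, hγ, hFγ⟩ := exists_mem_Ioo_pos_of_hasDerivAt hF' (sub_pos.2 hR) hF0 one_pos
  have hcont : ContinuousOn F (Set.Icc 0 1) :=
    ((continuousOn_gallagerE0 hPpos hp).mono fun t (ht : t ∈ Set.Icc 0 1) =>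
      show -1 < t by linarith [ht.1]).sub (by fun_prop)
  exact hFγ.trans_le <| le_csSup (isCompact_Icc.image_of_continuousOn hcont).bddAbove
    ⟨γ, Set.Ioo_subset_Icc_self hγ, rfl⟩

/-- For every `p ∈ [0,1]` and every `R` with `0 ≤ R < I_0(p)`, the partial error
exponent is strictly positive: `E(p,R) > 0`. -/
theorem partialErrorExponent_pos
    (𝒴 : Type) [Fintype 𝒴]
    (P : ZMod 2 → 𝒴 → ℝ)
    (hPpos : ∀ x y, 0 < P x y) (hPsum : ∀ x, ∑ y : 𝒴, P x y = 1)
    (p : ℝ) (hp : p ∈ Set.Icc (0 : ℝ) 1)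
    (R : ℝ) (hR0 : 0 ≤ R) (hR : R < partialMI0 P p) :
    0 < partialErrorExponent P p R :=
  partialErrorExponent_pos_general 𝒴 P hPpos hPsum p hp R hR
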